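/- For n ≥ 3, the subspace ℍ_ε^⊥ of A_{n+1} is a left module over ℍ_ε ≅ ℍ under the action u·α := αu (the algebra product), i.e. for all u, v ∈ ℍ_ε and α ∈ ℍ_ε^⊥ one has e₀·α = α, u·α ∈ ℍ_ε^⊥, and u·(v·α) = (uv)·α (equivalently (αv)u = α(uv)). Moreover, the restriction of this action to the unit sphere S³ = S(ℍ_ε) is a group action on ℍ_ε^⊥ that is smooth, orthogonal (each u ∈ S(ℍ_ε) acts as a linear isometry), and free of fixed points on nonzero vectors (αu = α with α ≠ 0 forces u = e₀). -/

import Mathlib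

noncomputable section

/-- The Cayley–Dickson algebra `A n` of dimension `2^n` over `ℝ`:
`A 0 = ℝ` and `A (n+1) = A n × A n`. -/
def CD : ℕ → Type
  | 0 => ℝ
  | n + 1 => CD n × CD n

namespace CD

instance instAddCommGroup : (n : ℕ) → AddCommGroup (CD n)
  | 0 => inferInstanceAs (AddCommGroup ℝ)
  | n + 1 =>
    letI := instAddCommGroup n
    inferInstanceAs (AddCommGroup (CD n × CD n))

instance instModule : (n : ℕ) → Module ℝ (CD n)
  | 0 => inferInstanceAs (Module ℝ ℝ)
  | n + 1 =>
    letI := instAddCommGroup n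
    letI := instModule n
    inferInstanceAs (Module ℝ (CD n × CD n))

/-- Conjugation: `x̄ = x` on `ℝ` and `(x₁,x₂)‾ = (x̄₁, -x₂)`. -/
protected def conj : {n : ℕ} → CD n → CD n
  | 0, x => x
  | _ + 1, x => (CD.conj x.1, -x.2)

/-- Cayley–Dickson multiplication: `(a,b)(x,y) = (ax - ȳb, ya + bx̄)`. -/
protected def mul : {n : ℕ} → CD n → CD n → CD n
  | 0, x, y => (show ℝ from x) * (show ℝ from y)
  | _ + 1, x, y =>
    (CD.mul x.1 y.1 - CD.mul (CD.conj y.2) x.2,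
     CD.mul y.2 x.1 + CD.mul x.2 (CD.conj y.1))

instance instMul (n : ℕ) : Mul (CD n) := ⟨CD.mul⟩

/-- The multiplicative unit `e₀` of `A n`. -/
def e0 : (n : ℕ) → CD n
  | 0 => (1 : ℝ)
  | n + 1 => (e0 n, 0)

/-- The element `ẽ₀ = (0, e₀)` of `A n` (junk value `0` for `n = 0`). -/
def te0 : (n : ℕ) → CD n
  | 0 => 0
  | n + 1 => (0, e0 n)

/-- The "complexification" `α̃ = (-b, a)` of `α = (a,b)` (junk value `0` for `n = 0`);
note `α̃ = α·ẽ₀`. -/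
def tilde : {n : ℕ} → CD n → CD n
  | 0, _ => 0
  | _ + 1, x => (-x.2, x.1)

/-- The standard inner product on `A n ≅ ℝ^{2^n}`. -/
protected def inner : {n : ℕ} → CD n → CD n → ℝ
  | 0, x, y => (show ℝ from x) * (show ℝ from y)
  | _ + 1, x, y => CD.inner x.1 y.1 + CD.inner x.2 y.2

/-- The euclidean norm on `A n`. -/
protected def norm {n : ℕ} (x : CD n) : ℝ := Real.sqrt (CD.inner x x)

/-- `x` is pure if its trace `t(x) = x + x̄` vanishes. -/
def IsPure {n : ℕ} (x : CD n) : Prop := x + CD.conj x = 0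

/-- `x = (a,b)` is doubly pure if both `a` and `b` are pure
(equivalently, both `x` and `x̃` are pure). -/
def IsDoublyPure : {n : ℕ} → CD n → Prop
  | 0, x => x = 0
  | _ + 1, x => IsPure x.1 ∧ IsPure x.2

/-- The associator `(x,y,z) = (xy)z - x(yz)`. -/
def assoc {n : ℕ} (x y z : CD n) : CD n := (x * y) * z - x * (y * z)

/-- The subspace `ℍ_a`: the real span of `{e₀, ã, a, ẽ₀}`. -/
def Ha {n : ℕ} (a : CD n) : Submodule ℝ (CD n) :=
  Submodule.span ℝ {e0 n, tilde a, a, te0 n}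

/-- The orthogonal complement `ℍ_a^⊥` of `ℍ_a` in `A n`. -/
def HaPerp {n : ℕ} (a : CD n) : Set (CD n) :=
  {x | ∀ y ∈ Ha a, CD.inner x y = 0}

/-- The element `ε = (ẽ₀, 0)` of `A (n+1)`. -/
def eps (n : ℕ) : CD (n + 1) := (te0 n, 0)

/-- `α̂ = (b,a)` for `α = (a,b) ∈ A (n+1)`. -/
def hat {n : ℕ} (x : CD (n + 1)) : CD (n + 1) := (x.2, x.1)

/-- The element `(a, b)` of `A (n+1) = A n × A n`. -/
def pair {n : ℕ} (a b : CD n) : CD (n + 1) := (a, b)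

end CD

/-!
Write `A_{n+1} = A_n × A_n` and `t = ẽ₀ ∈ A_n`. An element of `ℍ_ε^⊥` is a pair of doubly pure
elements, and a doubly pure `c` anticommutes with `t`: `t c = -c t`. Together with
`t² = -e₀` this makes `(α v) u = α (u v)` a finite check on the basis `e₀, ε̃, ε, ẽ₀` of `ℍ_ε`,
which extends bilinearly. The rest comes from the adjunction formulas
`⟨x y, z⟩ = ⟨y, x̄ z⟩ = ⟨x, z ȳ⟩` and from `x̄ x = ‖x‖² e₀`, valid in every Cayley–Dickson algebra,
together with `ℍ_ε` being a subalgebra closed under conjugation: `⟨α u, h⟩ = ⟨α, h ū⟩ = 0` for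
`h ∈ ℍ_ε`; `⟨α u, β u⟩ = ⟨α, β (ū u)⟩ = ⟨α, β⟩` for a unit `u`; and `⟨α u, α⟩ = ‖α‖² ⟨u, e₀⟩`,
which equals `‖α‖²` for a unit `u` only when `u = e₀`.
-/

namespace CD

variable {n : ℕ}

@[ext] theorem ext {x y : CD (n + 1)} (h₁ : x.1 = y.1) (h₂ : x.2 = y.2) : x = y := Prod.ext h₁ h₂

@[simp] theorem fst_add (x y : CD (n + 1)) : (x + y).1 = x.1 + y.1 := rfl
@[simp] theorem snd_add (x y : CD (n + 1)) : (x + y).2 = x.2 + y.2 := rfl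
@[simp] theorem fst_neg (x : CD (n + 1)) : (-x).1 = -x.1 := rfl
@[simp] theorem snd_neg (x : CD (n + 1)) : (-x).2 = -x.2 := rfl
@[simp] theorem fst_smul (r : ℝ) (x : CD (n + 1)) : (r • x).1 = r • x.1 := rfl
@[simp] theorem snd_smul (r : ℝ) (x : CD (n + 1)) : (r • x).2 = r • x.2 := rfl
@[simp] theorem fst_mul (x y : CD (n + 1)) : (x * y).1 = x.1 * y.1 - CD.conj y.2 * x.2 := rfl
@[simp] theorem snd_mul (x y : CD (n + 1)) : (x * y).2 = y.2 * x.1 + x.2 * CD.conj y.1 := rfl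
@[simp] theorem fst_conj (x : CD (n + 1)) : (CD.conj x).1 = CD.conj x.1 := rfl
@[simp] theorem snd_conj (x : CD (n + 1)) : (CD.conj x).2 = -x.2 := rfl
@[simp] theorem fst_e0 : (e0 (n + 1)).1 = e0 n := rfl
@[simp] theorem snd_e0 : (e0 (n + 1)).2 = 0 := rfl
@[simp] theorem fst_te0 : (te0 (n + 1)).1 = 0 := rfl
@[simp] theorem snd_te0 : (te0 (n + 1)).2 = e0 n := rfl

theorem conj_add (x y : CD n) : CD.conj (x + y) = CD.conj x + CD.conj y := by
  induction n with
  | zero => rfl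
  | succ n ih => ext <;> simp [ih, add_comm]

theorem conj_smul (r : ℝ) (x : CD n) : CD.conj (r • x) = r • CD.conj x := by
  induction n with
  | zero => rfl
  | succ n ih => ext <;> simp [ih]

def conjₗ (n : ℕ) : CD n →ₗ[ℝ] CD n where
  toFun := CD.conj
  map_add' := conj_add
  map_smul' := conj_smul

@[simp] theorem conj_zero : CD.conj (0 : CD n) = 0 := map_zero (conjₗ n)
@[simp] theorem conj_neg (x : CD n) : CD.conj (-x) = -CD.conj x := map_neg (conjₗ n) x

@[simp] theorem conj_conj (x : CD n) : CD.conj (CD.conj x) = x := by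
  induction n with
  | zero => rfl
  | succ n ih => ext <;> simp [ih]

@[simp] theorem conj_e0 : CD.conj (e0 n) = e0 n := by
  induction n with
  | zero => rfl
  | succ n ih => ext <;> simp [ih]

theorem add_mul_and_mul_add (n : ℕ) :
    (∀ x y z : CD n, (x + y) * z = x * z + y * z) ∧
      ∀ x y z : CD n, x * (y + z) = x * y + x * z := by
  induction n with
  | zero => exact ⟨add_mul (R := ℝ), mul_add (R := ℝ)⟩
  | succ n ih =>
    obtain ⟨add_mul, mul_add⟩ := ih
    constructor <;> intro x y z <;> ext <;>
      simp only [fst_mul, snd_mul, fst_add, snd_add, add_mul, mul_add, conj_add] <;> abel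

theorem smul_mul_and_mul_smul (n : ℕ) :
    (∀ (r : ℝ) (x y : CD n), (r • x) * y = r • (x * y)) ∧
      ∀ (r : ℝ) (x y : CD n), x * (r • y) = r • (x * y) := by
  induction n with
  | zero =>
    exact ⟨fun r x y => mul_assoc (G := ℝ) r x y, fun r x y => mul_left_comm (G := ℝ) x r y⟩
  | succ n ih =>
    obtain ⟨smul_mul, mul_smul⟩ := ih
    constructor <;> intro r x y <;> ext <;> simp [smul_mul, mul_smul, conj_smul, smul_sub, smul_add]

-- Kept local: as global instances they would give `+`, `0` and `•` on `CD n` a second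
-- elaboration, defeq to but syntactically different from the one the definitions fix.
abbrev nonUnitalNonAssocRing (n : ℕ) : NonUnitalNonAssocRing (CD n) where
  left_distrib := (add_mul_and_mul_add n).2
  right_distrib := (add_mul_and_mul_add n).1
  zero_mul x := by simpa using (add_mul_and_mul_add n).1 0 0 x
  mul_zero x := by simpa using (add_mul_and_mul_add n).2 x 0 0

attribute [local instance] nonUnitalNonAssocRing

instance (n : ℕ) : IsScalarTower ℝ (CD n) (CD n) := ⟨(smul_mul_and_mul_smul n).1⟩

instance (n : ℕ) : SMulCommClass ℝ (CD n) (CD n) :=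
  ⟨fun r x y => ((smul_mul_and_mul_smul n).2 r x y).symm⟩

@[simp] theorem mul_e0 (x : CD n) : x * e0 n = x := by
  induction n with
  | zero => exact mul_one (M := ℝ) x
  | succ n ih => ext <;> simp [ih]

@[simp] theorem e0_mul (x : CD n) : e0 n * x = x := by
  induction n with
  | zero => exact one_mul (M := ℝ) x
  | succ n ih => ext <;> simp [ih]

instance (n : ℕ) : Inner ℝ (CD n) := ⟨CD.inner⟩

open scoped RealInnerProductSpace

theorem inner_eq (x y : CD n) : CD.inner x y = ⟪x, y⟫ := rfl

theorem inner_succ (x y : CD (n + 1)) : ⟪x, y⟫ = ⟪x.1, y.1⟫ + ⟪x.2, y.2⟫ := rfl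

private theorem inner_comm' (x y : CD n) : ⟪x, y⟫ = ⟪y, x⟫ := by
  induction n with
  | zero => exact mul_comm (G := ℝ) x y
  | succ n ih => rw [inner_succ, inner_succ, ih x.1, ih x.2]

private theorem inner_add_left' (x y z : CD n) : ⟪x + y, z⟫ = ⟪x, z⟫ + ⟪y, z⟫ := by
  induction n with
  | zero => exact add_mul (R := ℝ) x y z
  | succ n ih => simp only [inner_succ, fst_add, snd_add, ih]; ring

private theorem inner_smul_left' (r : ℝ) (x y : CD n) : ⟪r • x, y⟫ = r * ⟪x, y⟫ := by
  induction n with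
  | zero => exact mul_assoc (G := ℝ) r x y
  | succ n ih => simp only [inner_succ, fst_smul, snd_smul, ih]; ring

private theorem inner_self_nonneg' (x : CD n) : 0 ≤ ⟪x, x⟫ := by
  induction n with
  | zero => exact mul_self_nonneg (R := ℝ) x
  | succ n ih => exact add_nonneg (ih x.1) (ih x.2)

private theorem eq_zero_of_inner_self' (x : CD n) (h : ⟪x, x⟫ = 0) : x = 0 := by
  induction n with
  | zero => exact mul_self_eq_zero (M₀ := ℝ).1 h
  | succ n ih =>
    rw [inner_succ] at h
    have h₁ := inner_self_nonneg' x.1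
    have h₂ := inner_self_nonneg' x.2
    ext
    · exact ih x.1 (by linarith)
    · exact ih x.2 (by linarith)

abbrev normedAddCommGroup (n : ℕ) : NormedAddCommGroup (CD n) :=
  @InnerProductSpace.Core.toNormedAddCommGroup ℝ (CD n) _ _ _
    { toInner := inferInstance
      conj_inner_symm := fun x y => inner_comm' y x
      re_inner_nonneg := inner_self_nonneg'
      definite := eq_zero_of_inner_self'
      add_left := inner_add_left'
      smul_left := fun x y r => inner_smul_left' r x y }

attribute [local instance] normedAddCommGroup

abbrev innerProductSpace (n : ℕ) : InnerProductSpace ℝ (CD n) := InnerProductSpace.ofCore _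

attribute [local instance] innerProductSpace

theorem norm_eq (x : CD n) : CD.norm x = ‖x‖ := by
  rw [norm_eq_sqrt_real_inner]; rfl

private theorem inner_mul_left_and_right (n : ℕ) :
    (∀ x y z : CD n, ⟪x * y, z⟫ = ⟪y, CD.conj x * z⟫) ∧
      ∀ x y z : CD n, ⟪x * y, z⟫ = ⟪x, z * CD.conj y⟫ := by
  induction n with
  | zero =>
    exact ⟨fun x y z => (mul_assoc (G := ℝ) x y z).trans (mul_left_comm (G := ℝ) x y z),
      fun x y z => (mul_right_comm (G := ℝ) x y z).trans (mul_assoc (G := ℝ) x z y)⟩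
  | succ n ih =>
    obtain ⟨L, R⟩ := ih
    have hL (x y z : CD n) : ⟪CD.conj x * y, z⟫ = ⟪y, x * z⟫ := by rw [L, conj_conj]
    have hR (x y z : CD n) : ⟪x * CD.conj y, z⟫ = ⟪x, z * y⟫ := by rw [R, conj_conj]
    refine ⟨fun x y z => ?_, fun x y z => ?_⟩ <;>
      simp only [inner_succ, fst_mul, snd_mul, fst_conj, snd_conj, inner_add_left,
        inner_sub_left, inner_add_right, neg_mul, mul_neg, inner_neg_right, conj_conj,
        sub_neg_eq_add, conj_neg]
    · linarith [L x.1 y.1 z.1, hL y.2 x.2 z.1, R y.2 x.1 z.2, hR x.2 y.1 z.2, hL z.2 x.2 y.1,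
        hR x.2 z.1 y.2, real_inner_comm y.1 (CD.conj z.2 * x.2),
        real_inner_comm y.2 (x.2 * CD.conj z.1)]
    · linarith [R x.1 y.1 z.1, hL y.2 x.2 z.1, L y.2 x.1 z.2, hR x.2 y.1 z.2]

theorem inner_mul_left (x y z : CD n) : ⟪x * y, z⟫ = ⟪y, CD.conj x * z⟫ :=
  (inner_mul_left_and_right n).1 x y z

theorem inner_mul_right (x y z : CD n) : ⟪x * y, z⟫ = ⟪x, z * CD.conj y⟫ :=
  (inner_mul_left_and_right n).2 x y z

theorem norm_sq_succ (x : CD (n + 1)) : ‖x‖ ^ 2 = ‖x.1‖ ^ 2 + ‖x.2‖ ^ 2 := by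
  simp only [← real_inner_self_eq_norm_sq, inner_succ]

theorem conj_mul_self (x : CD n) : CD.conj x * x = ‖x‖ ^ 2 • e0 n := by
  induction n with
  | zero =>
    rw [← real_inner_self_eq_norm_sq]
    let r : ℝ := x
    change r * r = (r * r) * 1
    ring
  | succ n ih => ext <;> simp [ih, norm_sq_succ, add_smul]

theorem add_conj (x : CD n) : x + CD.conj x = (2 * ⟪x, e0 n⟫) • e0 n := by
  induction n with
  | zero =>
    let r : ℝ := x
    change r + r = (2 * (r * 1)) * 1
    ring
  | succ n ih => ext <;> simp [ih, inner_succ]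

theorem isPure_of_inner_e0 {x : CD n} (h : ⟪x, e0 n⟫ = 0) : IsPure x := by
  simp [IsPure, add_conj, h]

theorem IsPure.conj_eq {x : CD n} (h : IsPure x) : CD.conj x = -x :=
  eq_neg_of_add_eq_zero_right h

theorem IsPure.neg {x : CD n} (h : IsPure x) : IsPure (-x) := by
  simp [IsPure, conj_neg, h.conj_eq]

section ImaginaryUnit

variable {m : ℕ}

@[simp] theorem conj_te0 : CD.conj (te0 (m + 1)) = -te0 (m + 1) := by ext <;> simp

@[simp] theorem te0_mul_te0 : te0 (m + 1) * te0 (m + 1) = -e0 (m + 1) := by ext <;> simp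

theorem IsDoublyPure.te0_mul {c : CD (m + 1)} (hc : IsDoublyPure c) :
    te0 (m + 1) * c = -(c * te0 (m + 1)) := by
  ext <;> simp [hc.1.conj_eq, hc.2.conj_eq]

theorem IsDoublyPure.mul_te0 {c : CD (m + 1)} (hc : IsDoublyPure c) :
    IsDoublyPure (c * te0 (m + 1)) :=
  ⟨by simpa using hc.2.neg, by simpa using hc.1⟩

theorem isDoublyPure_of_inner {c : CD (m + 1)} (h₀ : ⟪c, e0 (m + 1)⟫ = 0)
    (h₁ : ⟪c, te0 (m + 1)⟫ = 0) : IsDoublyPure c :=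
  ⟨isPure_of_inner_e0 (by simpa [inner_succ] using h₀),
    isPure_of_inner_e0 (by simpa [inner_succ] using h₁)⟩

end ImaginaryUnit

theorem inner_e0_self : ⟪e0 n, e0 n⟫ = 1 := by
  induction n with
  | zero => exact mul_one (M := ℝ) 1
  | succ n ih => rw [inner_succ, fst_e0, snd_e0, ih, inner_zero_left, add_zero]

@[simp] theorem norm_e0 : ‖e0 n‖ = 1 := by
  rw [norm_eq_sqrt_real_inner, inner_e0_self, Real.sqrt_one]

section Quaternions

variable {m : ℕ}

@[simp] theorem fst_eps : (eps m).1 = te0 m := rfl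
@[simp] theorem snd_eps : (eps m).2 = 0 := rfl
@[simp] theorem fst_tilde (x : CD (m + 1)) : (tilde x).1 = -x.2 := rfl
@[simp] theorem snd_tilde (x : CD (m + 1)) : (tilde x).2 = x.1 := rfl

theorem e0_mem_Ha : e0 (m + 1) ∈ Ha (eps m) := Submodule.subset_span (by simp)
theorem tilde_eps_mem_Ha : tilde (eps m) ∈ Ha (eps m) := Submodule.subset_span (by simp)
theorem eps_mem_Ha : eps m ∈ Ha (eps m) := Submodule.subset_span (by simp)
theorem te0_mem_Ha : te0 (m + 1) ∈ Ha (eps m) := Submodule.subset_span (by simp)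

@[simp] theorem conj_eps : CD.conj (eps (m + 1)) = -eps (m + 1) := by ext <;> simp
@[simp] theorem conj_tilde_eps : CD.conj (tilde (eps (m + 1))) = -tilde (eps (m + 1)) := by
  ext <;> simp

@[simp] theorem eps_mul_eps : eps (m + 1) * eps (m + 1) = -e0 (m + 2) := by ext <;> simp
@[simp] theorem tilde_eps_mul_tilde_eps :
    tilde (eps (m + 1)) * tilde (eps (m + 1)) = -e0 (m + 2) := by ext <;> simp
@[simp] theorem eps_mul_tilde_eps : eps (m + 1) * tilde (eps (m + 1)) = -te0 (m + 2) := by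
  ext <;> simp
@[simp] theorem tilde_eps_mul_eps : tilde (eps (m + 1)) * eps (m + 1) = te0 (m + 2) := by
  ext <;> simp
@[simp] theorem eps_mul_te0 : eps (m + 1) * te0 (m + 2) = tilde (eps (m + 1)) := by
  ext <;> simp
@[simp] theorem te0_mul_eps : te0 (m + 2) * eps (m + 1) = -tilde (eps (m + 1)) := by
  ext <;> simp
@[simp] theorem tilde_eps_mul_te0 : tilde (eps (m + 1)) * te0 (m + 2) = -eps (m + 1) := by
  ext <;> simp
@[simp] theorem te0_mul_tilde_eps : te0 (m + 2) * tilde (eps (m + 1)) = eps (m + 1) := by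
  ext <;> simp

theorem mul_mem_Ha {x y : CD (m + 2)} (hx : x ∈ Ha (eps (m + 1)))
    (hy : y ∈ Ha (eps (m + 1))) : x * y ∈ Ha (eps (m + 1)) := by
  induction hx, hy using Submodule.span_induction₂ with
  | mem_mem x y hx hy =>
    simp only [Set.mem_insert_iff, Set.mem_singleton_iff] at hx hy
    rcases hx with rfl | rfl | rfl | rfl <;> rcases hy with rfl | rfl | rfl | rfl <;>
      simp [e0_mem_Ha, tilde_eps_mem_Ha, eps_mem_Ha, te0_mem_Ha]
  | zero_left => simp
  | zero_right => simp
  | add_left _ _ _ _ _ _ hxz hyz => rw [add_mul]; exact add_mem hxz hyz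
  | add_right _ _ _ _ _ _ hxy hxz => rw [mul_add]; exact add_mem hxy hxz
  | smul_left r _ _ _ _ h => rw [smul_mul_assoc]; exact Submodule.smul_mem _ r h
  | smul_right r _ _ _ _ h => rw [mul_smul_comm]; exact Submodule.smul_mem _ r h

theorem conj_mem_Ha {x : CD (m + 2)} (hx : x ∈ Ha (eps (m + 1))) :
    CD.conj x ∈ Ha (eps (m + 1)) := by
  induction hx using Submodule.span_induction with
  | mem x hx =>
    simp only [Set.mem_insert_iff, Set.mem_singleton_iff] at hx
    rcases hx with rfl | rfl | rfl | rfl <;>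
      simp [e0_mem_Ha, tilde_eps_mem_Ha, eps_mem_Ha, te0_mem_Ha]
  | zero => simp
  | add _ _ _ _ hx hy => rw [conj_add]; exact add_mem hx hy
  | smul r _ _ hx => rw [conj_smul]; exact Submodule.smul_mem _ r hx

theorem isDoublyPure_of_mem_HaPerp {α : CD (m + 2)} (hα : α ∈ HaPerp (eps (m + 1))) :
    IsDoublyPure α.1 ∧ IsDoublyPure α.2 := by
  have h₀ := hα _ e0_mem_Ha
  have h₁ := hα _ tilde_eps_mem_Ha
  have h₂ := hα _ eps_mem_Ha
  have h₃ := hα _ te0_mem_Ha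
  rw [inner_eq, inner_succ] at h₀ h₁ h₂ h₃
  simp only [fst_e0, snd_e0, fst_tilde, snd_tilde, fst_eps, snd_eps, fst_te0, snd_te0,
    inner_zero_right, add_zero, zero_add, neg_zero] at h₀ h₁ h₂ h₃
  exact ⟨isDoublyPure_of_inner h₀ h₂, isDoublyPure_of_inner h₃ h₁⟩

theorem mul_mul_of_isDoublyPure {α u v : CD (m + 2)} (hα : IsDoublyPure α.1 ∧ IsDoublyPure α.2)
    (hu : u ∈ ({e0 (m + 2), tilde (eps (m + 1)), eps (m + 1), te0 (m + 2)} : Set (CD (m + 2))))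
    (hv : v ∈ ({e0 (m + 2), tilde (eps (m + 1)), eps (m + 1), te0 (m + 2)} : Set (CD (m + 2)))) :
    α * v * u = α * (u * v) := by
  obtain ⟨ha, hb⟩ := hα
  simp only [Set.mem_insert_iff, Set.mem_singleton_iff] at hu hv
  rcases hu with rfl | rfl | rfl | rfl <;> rcases hv with rfl | rfl | rfl | rfl <;>
    ext <;> simp [ha.te0_mul, hb.te0_mul, ha.mul_te0.te0_mul, hb.mul_te0.te0_mul]

theorem mul_mul_of_mem_HaPerp {α u v : CD (m + 2)} (hα : α ∈ HaPerp (eps (m + 1)))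
    (hu : u ∈ Ha (eps (m + 1))) (hv : v ∈ Ha (eps (m + 1))) : α * v * u = α * (u * v) := by
  have hpure := isDoublyPure_of_mem_HaPerp hα
  induction hu, hv using Submodule.span_induction₂ with
  | mem_mem u v hu hv => exact mul_mul_of_isDoublyPure hpure hu hv
  | zero_left => simp
  | zero_right => simp
  | add_left _ _ _ _ _ _ h h' => rw [mul_add, h, h', add_mul, mul_add]
  | add_right _ _ _ _ _ _ h h' => rw [mul_add, add_mul, h, h', mul_add, mul_add]
  | smul_left r _ _ _ _ h => rw [mul_smul_comm, h, smul_mul_assoc, mul_smul_comm]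
  | smul_right r _ _ _ _ h =>
    rw [mul_smul_comm, smul_mul_assoc, h, mul_smul_comm, mul_smul_comm]

theorem mul_mem_HaPerp {α u : CD (m + 2)} (hα : α ∈ HaPerp (eps (m + 1)))
    (hu : u ∈ Ha (eps (m + 1))) : α * u ∈ HaPerp (eps (m + 1)) := fun h hh => by
  rw [inner_eq, inner_mul_right]
  exact hα _ (mul_mem_Ha hh (conj_mem_Ha hu))

theorem inner_mul_mul_of_mem_HaPerp {α β u : CD (m + 2)} (hβ : β ∈ HaPerp (eps (m + 1)))
    (hu : u ∈ Ha (eps (m + 1))) (hu₁ : ‖u‖ = 1) : ⟪α * u, β * u⟫ = ⟪α, β⟫ := by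
  rw [inner_mul_right, mul_mul_of_mem_HaPerp hβ (conj_mem_Ha hu) hu, conj_mul_self, hu₁,
    one_pow, one_smul, mul_e0]

end Quaternions

theorem eq_e0_of_mul_eq_self {α u : CD n} (hα : α ≠ 0) (hu : ‖u‖ = 1) (h : α * u = α) :
    u = e0 n := by
  have hinner : ‖α‖ ^ 2 * ⟪u, e0 n⟫ = ‖α‖ ^ 2 * 1 := by
    rw [mul_one, ← real_inner_smul_right, ← conj_mul_self, ← inner_mul_left, h,
      real_inner_self_eq_norm_sq]
  exact (inner_eq_one_iff_of_norm_eq_one hu norm_e0).1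
    (mul_left_cancel₀ (by positivity) hinner)

end CD

/-- For `n ≥ 3`, `ℍ_ε^⊥` is a left `ℍ_ε`-module under `u·α := αu`:
`e₀` acts as the identity, the action preserves `ℍ_ε^⊥` and satisfies
`u·(v·α) = (uv)·α`, i.e. `(αv)u = α(uv)`.  Moreover the restriction to the unit
sphere `S³ = S(ℍ_ε)` acts by linear (hence smooth) orthogonal transformations
and is free of fixed points on nonzero vectors. -/
theorem statement14 (n : ℕ) (hn : 3 ≤ n) :
    (∀ α ∈ CD.HaPerp (CD.eps n), α * CD.e0 (n + 1) = α) ∧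
    (∀ u ∈ CD.Ha (CD.eps n), ∀ α ∈ CD.HaPerp (CD.eps n),
      α * u ∈ CD.HaPerp (CD.eps n)) ∧
    (∀ u ∈ CD.Ha (CD.eps n), ∀ v ∈ CD.Ha (CD.eps n),
      ∀ α ∈ CD.HaPerp (CD.eps n), (α * v) * u = α * (u * v)) ∧
    (∀ u : CD (n + 1), ∀ (r : ℝ) (α β : CD (n + 1)),
      (α + β) * u = α * u + β * u ∧ (r • α) * u = r • (α * u)) ∧
    (∀ u ∈ CD.Ha (CD.eps n), CD.norm u = 1 →
      ∀ α ∈ CD.HaPerp (CD.eps n), ∀ β ∈ CD.HaPerp (CD.eps n),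
        CD.inner (α * u) (β * u) = CD.inner α β) ∧
    (∀ u ∈ CD.Ha (CD.eps n), CD.norm u = 1 →
      ∀ α ∈ CD.HaPerp (CD.eps n), α ≠ 0 → α * u = α → u = CD.e0 (n + 1)) := by
  obtain ⟨m, rfl⟩ : ∃ m, n = m + 1 := ⟨n - 1, by omega⟩
  refine ⟨fun α _ => CD.mul_e0 α, fun u hu α hα => CD.mul_mem_HaPerp hα hu,
    fun u hu v hv α hα => CD.mul_mul_of_mem_HaPerp hα hu hv,
    fun u r α β => ⟨(CD.add_mul_and_mul_add _).1 α β u, (CD.smul_mul_and_mul_smul _).1 r α u⟩,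
    fun u hu hu₁ α _ β hβ => ?_, fun u _ hu₁ α _ hα h => ?_⟩
  · rw [CD.norm_eq] at hu₁
    exact CD.inner_mul_mul_of_mem_HaPerp hβ hu hu₁
  · rw [CD.norm_eq] at hu₁
    exact CD.eq_e0_of_mul_eq_self hα hu₁ h
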